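/- For all integers j, k ≥ 2, there exist g, h ∈ Lie(ℱ) such that tr A^j agrees with g and tr B^k agrees with h at every point of Ŝ_n. -/

import Mathlib

open MvPolynomial Matrix

/-- Polynomial functions on `M_n(ℂ) × M_n(ℂ)`, represented as polynomials in the
entries of the two matrices. -/
abbrev PolyFun (n : ℕ) := MvPolynomial ((Fin n × Fin n) ⊕ (Fin n × Fin n)) ℂ

/-- The matrix of coordinate functions `X_{jk}`. -/
noncomputable def Xmat (n : ℕ) : Matrix (Fin n) (Fin n) (PolyFun n) :=
  fun i j => MvPolynomial.X (Sum.inl (i, j))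

/-- The matrix of coordinate functions `Y_{jk}`. -/
noncomputable def Ymat (n : ℕ) : Matrix (Fin n) (Fin n) (PolyFun n) :=
  fun i j => MvPolynomial.X (Sum.inr (i, j))

/-- Traceless part `A = X - (tr X / n) I_n`. -/
noncomputable def Amat (n : ℕ) : Matrix (Fin n) (Fin n) (PolyFun n) :=
  Xmat n - (MvPolynomial.C ((n : ℂ)⁻¹) * Matrix.trace (Xmat n)) • (1 : Matrix (Fin n) (Fin n) (PolyFun n))

/-- Traceless part `B = Y - (tr Y / n) I_n`. -/
noncomputable def Bmat (n : ℕ) : Matrix (Fin n) (Fin n) (PolyFun n) :=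
  Ymat n - (MvPolynomial.C ((n : ℂ)⁻¹) * Matrix.trace (Ymat n)) • (1 : Matrix (Fin n) (Fin n) (PolyFun n))

/-- The polynomial function `(X,Y) ↦ tr (A^p B^q)`. -/
noncomputable def trAB (n p q : ℕ) : PolyFun n :=
  Matrix.trace (Amat n ^ p * Bmat n ^ q)

/-- The polynomial function `(X,Y) ↦ tr (X^a Y^b)`. -/
noncomputable def trXY (n a b : ℕ) : PolyFun n :=
  Matrix.trace (Xmat n ^ a * Ymat n ^ b)

/-- The Poisson bracket
`{F,G} = Σ_{j,k} ∂F/∂X_{jk} ∂G/∂Y_{kj} − ∂F/∂Y_{jk} ∂G/∂X_{kj}`. -/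
noncomputable def pbracket {n : ℕ} (F G : PolyFun n) : PolyFun n :=
  ∑ j : Fin n, ∑ k : Fin n,
    (MvPolynomial.pderiv (Sum.inl (j, k)) F * MvPolynomial.pderiv (Sum.inr (k, j)) G
      - MvPolynomial.pderiv (Sum.inr (j, k)) F * MvPolynomial.pderiv (Sum.inl (k, j)) G)

/-- Evaluation of a polynomial function at a pair of matrices. -/
noncomputable def evalP {n : ℕ} (X Y : Matrix (Fin n) (Fin n) ℂ) (F : PolyFun n) : ℂ :=
  MvPolynomial.eval (Sum.elim (fun p => X p.1 p.2) (fun p => Y p.1 p.2)) F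

/-- The Calogero–Moser variety `Ĉ_n = {(X,Y) : rank([X,Y] − i I_n) = 1}`. -/
def Chat (n : ℕ) : Set (Matrix (Fin n) (Fin n) ℂ × Matrix (Fin n) (Fin n) ℂ) :=
  {P | ((P.1 * P.2 - P.2 * P.1) - Complex.I • (1 : Matrix (Fin n) (Fin n) ℂ)).rank = 1}

/-- The traceless Calogero–Moser variety
`Ŝ_n = {(X,Y) : tr X = tr Y = 0, rank([X,Y] − i I_n) = 1}`. -/
def Shat (n : ℕ) : Set (Matrix (Fin n) (Fin n) ℂ × Matrix (Fin n) (Fin n) ℂ) :=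
  {P | Matrix.trace P.1 = 0 ∧ Matrix.trace P.2 = 0 ∧
    ((P.1 * P.2 - P.2 * P.1) - Complex.I • (1 : Matrix (Fin n) (Fin n) ℂ)).rank = 1}

/-- The set `ℱ = {tr A², tr B², tr A³, (tr AB)²}`. -/
noncomputable def calF (n : ℕ) : Set (PolyFun n) :=
  {trAB n 2 0, trAB n 0 2, trAB n 3 0, (trAB n 1 1) ^ 2}

/-- The smallest ℂ-linear subspace of the polynomial functions containing `S`
and closed under the Poisson bracket. -/
inductive LieGen (n : ℕ) (S : Set (PolyFun n)) : PolyFun n → Prop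
  | base {f : PolyFun n} : f ∈ S → LieGen n S f
  | zero : LieGen n S 0
  | add {f g : PolyFun n} : LieGen n S f → LieGen n S g → LieGen n S (f + g)
  | smul (c : ℂ) {f : PolyFun n} : LieGen n S f → LieGen n S (c • f)
  | bracket {f g : PolyFun n} : LieGen n S f → LieGen n S g → LieGen n S (pbracket f g)

/-! Already as polynomials, `tr A^j` and `tr B^k` lie in `Lie(ℱ)`. Writing `∂_X F` for the
(transposed) matrix of partial derivatives, `{F, G} = tr (∂_X F ∂_Y G) - tr (∂_Y F ∂_X G)`,
and the gradients of `tr (A^p B^q)` are traceless parts of sums of words in `A` and `B`.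
This gives `{tr A^(p+1), tr B²} = 2(p+1) tr (A^p B)`, `{tr AB, tr A^(p+1)} = -(p+1) tr A^(p+1)`
and `{tr A³, tr (A^p B)} = 3 tr A^(p+2) - (3/n) tr A² tr A^p`. The first bracket yields
`tr (A^p B)`, the second (applied to `(tr AB)²`, then to `tr AB · tr A²`) yields
`tr A² · tr A^p`, and the third then expresses `tr A^(p+4)` through `tr A^(p+3)` and
`tr A^(p+2)`.

Three brackets with `tr B²` produce `tr B³`; then the image of `ℱ` under the swap `X ↔ Y` lies
in `Lie(ℱ)`, and since the swap reverses the bracket it maps `Lie(ℱ)` into itself and `tr A^k`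
to `tr B^k`.
-/

namespace Matrix

variable {n : ℕ} {R S : Type*} [CommRing R] [Algebra ℂ R] [CommRing S] [Algebra ℂ S]

noncomputable def tracelessPart (M : Matrix (Fin n) (Fin n) R) : Matrix (Fin n) (Fin n) R :=
  M - ((n : ℂ)⁻¹ • M.trace) • 1

lemma trace_tracelessPart_mul (M N : Matrix (Fin n) (Fin n) R) :
    (tracelessPart M * N).trace = (M * N).trace - (n : ℂ)⁻¹ • (M.trace * N.trace) := by
  simp [tracelessPart, sub_mul]

lemma trace_mul_tracelessPart (M N : Matrix (Fin n) (Fin n) R) :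
    (M * tracelessPart N).trace = (M * N).trace - (n : ℂ)⁻¹ • (M.trace * N.trace) := by
  rw [trace_mul_comm, trace_tracelessPart_mul, trace_mul_comm, mul_comm N.trace]

lemma trace_tracelessPart (M : Matrix (Fin n) (Fin n) R) : (tracelessPart M).trace = 0 := by
  rcases eq_or_ne n 0 with rfl | hn
  · simp [trace]
  · have h : M.trace * (n : R) = (n : ℂ) • M.trace := by
      rw [mul_comm, ← nsmul_eq_mul, Nat.cast_smul_eq_nsmul]
    have hn' : (n : ℂ) ≠ 0 := Nat.cast_ne_zero.mpr hn
    simp [tracelessPart, h, smul_smul, inv_mul_cancel₀ hn']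

lemma tracelessPart_of_trace_eq_zero {M : Matrix (Fin n) (Fin n) R} (hM : M.trace = 0) :
    tracelessPart M = M := by
  simp [tracelessPart, hM]

lemma map_tracelessPart (f : R →ₐ[ℂ] S) (M : Matrix (Fin n) (Fin n) R) :
    (tracelessPart M).map f = tracelessPart (M.map f) := by
  ext a b
  by_cases hab : a = b <;> simp [tracelessPart, hab, AddMonoidHom.map_trace]

lemma map_derivation_tracelessPart (D : Derivation ℂ R R) (M : Matrix (Fin n) (Fin n) R) :
    (tracelessPart M).map D = tracelessPart (M.map D) := by
  ext a b
  by_cases hab : a = b <;> simp [tracelessPart, hab, AddMonoidHom.map_trace]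

section Derivation

variable (D : Derivation ℂ R R)

lemma map_derivation_mul (M N : Matrix (Fin n) (Fin n) R) :
    (M * N).map D = M.map D * N + M * N.map D := by
  ext a b
  simp [mul_apply, Finset.sum_add_distrib, mul_comm, add_comm]

lemma map_derivation_pow (M : Matrix (Fin n) (Fin n) R) (p : ℕ) :
    (M ^ p).map D = ∑ i ∈ Finset.range p, M ^ i * M.map D * M ^ (p - 1 - i) := by
  induction p with
  | zero => ext a b; by_cases hab : a = b <;> simp [hab]
  | succ p ih =>
    rw [pow_succ, map_derivation_mul, ih, Finset.sum_range_succ, Finset.sum_mul]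
    congr 1
    · refine Finset.sum_congr rfl fun i hi => ?_
      rw [mul_assoc, ← pow_succ, show p - 1 - i + 1 = p + 1 - 1 - i by
        have := Finset.mem_range.mp hi; omega]
    · simp

lemma derivation_trace_pow_mul (M N : Matrix (Fin n) (Fin n) R) (hN : N.map D = 0) (p : ℕ) :
    D (M ^ p * N).trace =
      (M.map D * ∑ i ∈ Finset.range p, M ^ (p - 1 - i) * N * M ^ i).trace := by
  rw [AddMonoidHom.map_trace, map_derivation_mul, hN, mul_zero, add_zero, map_derivation_pow,
    Finset.sum_mul, Finset.mul_sum, trace_sum, trace_sum]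
  refine Finset.sum_congr rfl fun i _ => ?_
  rw [mul_assoc, mul_assoc, trace_mul_comm, ← mul_assoc, ← mul_assoc, ← mul_assoc]

lemma trace_tracelessPart_single_mul (j k : Fin n) (M : Matrix (Fin n) (Fin n) R) :
    (tracelessPart (single j k 1) * M).trace = tracelessPart M k j := by
  rw [trace_tracelessPart_mul, trace_single_mul, one_smul]
  by_cases hjk : j = k
  · subst hjk; simp [tracelessPart]
  · simp [tracelessPart, hjk, Ne.symm hjk]

end Derivation

end Matrix

section Gradient

variable {n : ℕ}

lemma Amat_eq_tracelessPart : Amat n = tracelessPart (Xmat n) := by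
  rw [Amat, tracelessPart, C_mul']

lemma Bmat_eq_tracelessPart : Bmat n = tracelessPart (Ymat n) := by
  rw [Bmat, tracelessPart, C_mul']

lemma trace_Amat : (Amat n).trace = 0 := by
  rw [Amat_eq_tracelessPart, trace_tracelessPart]

lemma trace_Bmat : (Bmat n).trace = 0 := by
  rw [Bmat_eq_tracelessPart, trace_tracelessPart]

lemma map_pderiv_Xmat_inl (j k : Fin n) :
    (Xmat n).map (pderiv (Sum.inl (j, k))) = single j k 1 := by
  ext a b
  simp [Xmat, pderiv_X, Pi.single_apply, single_apply, eq_comm]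

lemma map_pderiv_Ymat_inr (j k : Fin n) :
    (Ymat n).map (pderiv (Sum.inr (j, k))) = single j k 1 := by
  ext a b
  simp [Ymat, pderiv_X, Pi.single_apply, single_apply, eq_comm]

lemma map_pderiv_Amat_inl (j k : Fin n) :
    (Amat n).map (pderiv (Sum.inl (j, k))) = tracelessPart (single j k 1) := by
  rw [Amat_eq_tracelessPart, map_derivation_tracelessPart, map_pderiv_Xmat_inl]

lemma map_pderiv_Bmat_inr (j k : Fin n) :
    (Bmat n).map (pderiv (Sum.inr (j, k))) = tracelessPart (single j k 1) := by
  rw [Bmat_eq_tracelessPart, map_derivation_tracelessPart, map_pderiv_Ymat_inr]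

lemma map_pderiv_Amat_pow_inr (v : Fin n × Fin n) (p : ℕ) :
    (Amat n ^ p).map (pderiv (Sum.inr v)) = 0 := by
  have hX : (Xmat n).map (pderiv (Sum.inr v)) = 0 := by ext; simp [Xmat, pderiv_X]
  have : (Amat n).map (pderiv (Sum.inr v)) = 0 := by
    rw [Amat_eq_tracelessPart, map_derivation_tracelessPart, hX]; simp [tracelessPart]
  simp [map_derivation_pow, this]

lemma map_pderiv_Bmat_pow_inl (v : Fin n × Fin n) (q : ℕ) :
    (Bmat n ^ q).map (pderiv (Sum.inl v)) = 0 := by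
  have hY : (Ymat n).map (pderiv (Sum.inl v)) = 0 := by ext; simp [Ymat, pderiv_X]
  have : (Bmat n).map (pderiv (Sum.inl v)) = 0 := by
    rw [Bmat_eq_tracelessPart, map_derivation_tracelessPart, hY]; simp [tracelessPart]
  simp [map_derivation_pow, this]

-- Transposed, so that `∑_{j,k} ∂F/∂X_{jk} M_{kj} = tr (gradX F * M)`.
noncomputable def gradX (F : PolyFun n) : Matrix (Fin n) (Fin n) (PolyFun n) :=
  fun k j => pderiv (Sum.inl (j, k)) F

noncomputable def gradY (F : PolyFun n) : Matrix (Fin n) (Fin n) (PolyFun n) :=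
  fun k j => pderiv (Sum.inr (j, k)) F

lemma pbracket_eq_trace (F G : PolyFun n) :
    pbracket F G = (gradX F * gradY G).trace - (gradY F * gradX G).trace := by
  simp only [pbracket, trace, diag, mul_apply, gradX, gradY, ← Finset.sum_sub_distrib]
  rw [Finset.sum_comm]

lemma gradX_trAB (p q : ℕ) :
    gradX (trAB n p q) = tracelessPart
      (∑ i ∈ Finset.range p, Amat n ^ (p - 1 - i) * Bmat n ^ q * Amat n ^ i) := by
  ext k j
  rw [gradX, trAB, derivation_trace_pow_mul _ _ _ (map_pderiv_Bmat_pow_inl _ q),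
    map_pderiv_Amat_inl, trace_tracelessPart_single_mul]

lemma gradY_trAB (p q : ℕ) :
    gradY (trAB n p q) = tracelessPart
      (∑ i ∈ Finset.range q, Bmat n ^ (q - 1 - i) * Amat n ^ p * Bmat n ^ i) := by
  ext k j
  rw [gradY, trAB, trace_mul_comm, derivation_trace_pow_mul _ _ _ (map_pderiv_Amat_pow_inr _ p),
    map_pderiv_Bmat_inr, trace_tracelessPart_single_mul]

lemma pbracket_mul_left (F G H : PolyFun n) :
    pbracket (F * G) H = F * pbracket G H + G * pbracket F H := by
  simp only [pbracket, Derivation.leibniz, smul_eq_mul, Finset.mul_sum, ← Finset.sum_add_distrib]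
  refine Finset.sum_congr rfl fun j _ => Finset.sum_congr rfl fun k _ => by ring

end Gradient

section Brackets

variable {n : ℕ}

lemma sum_range_pow_mul_pow {α : Type*} [Semiring α] (M : α) (p : ℕ) :
    ∑ i ∈ Finset.range p, M ^ (p - 1 - i) * M ^ i = p • M ^ (p - 1) := by
  rw [← Finset.card_range p, ← Finset.sum_const, Finset.card_range]
  refine Finset.sum_congr rfl fun i hi => ?_
  rw [← pow_add, Nat.sub_add_cancel (by have := Finset.mem_range.mp hi; omega)]

lemma gradX_trAB_succ_zero (p : ℕ) :
    gradX (trAB n (p + 1) 0) = tracelessPart (((p : ℂ) + 1) • Amat n ^ p) := by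
  rw [gradX_trAB]
  simp only [pow_zero, mul_one]
  rw [sum_range_pow_mul_pow, Nat.add_sub_cancel, ← Nat.cast_smul_eq_nsmul ℂ]
  push_cast; rfl

lemma gradY_trAB_zero (p : ℕ) : gradY (trAB n p 0) = 0 := by
  simp [gradY_trAB, tracelessPart]

lemma gradX_trAB_zero_left (q : ℕ) : gradX (trAB n 0 q) = 0 := by
  simp [gradX_trAB, tracelessPart]

lemma gradY_trAB_one (p : ℕ) : gradY (trAB n p 1) = tracelessPart (Amat n ^ p) := by
  simp [gradY_trAB]

lemma gradX_trAB_one_left (q : ℕ) : gradX (trAB n 1 q) = tracelessPart (Bmat n ^ q) := by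
  simp [gradX_trAB]

lemma gradY_trAB_zero_two : gradY (trAB n 0 2) = (2 : ℂ) • Bmat n := by
  have hsum : ∑ i ∈ Finset.range 2, Bmat n ^ (2 - 1 - i) * Amat n ^ 0 * Bmat n ^ i =
      Bmat n + Bmat n := by
    simp [Finset.sum_range_succ]
  rw [gradY_trAB, hsum, tracelessPart_of_trace_eq_zero (by rw [trace_add, trace_Bmat, add_zero]),
    two_smul]

lemma gradY_trAB_one_one : gradY (trAB n 1 1) = Amat n := by
  rw [gradY_trAB_one, pow_one, tracelessPart_of_trace_eq_zero trace_Amat]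

lemma pbracket_trAB_zero_trAB_zero (a b : ℕ) : pbracket (trAB n a 0) (trAB n b 0) = 0 := by
  simp [pbracket_eq_trace, gradY_trAB_zero]

lemma pbracket_trAB_zero_two (F : PolyFun n) :
    pbracket F (trAB n 0 2) = (2 : ℂ) • (gradX F * Bmat n).trace := by
  simp [pbracket_eq_trace, gradX_trAB_zero_left, gradY_trAB_zero_two]

lemma pbracket_trAB_succ_zero_trAB_zero_two (p : ℕ) :
    pbracket (trAB n (p + 1) 0) (trAB n 0 2) = (2 * ((p : ℂ) + 1)) • trAB n p 1 := by
  rw [pbracket_trAB_zero_two, gradX_trAB_succ_zero, trace_tracelessPart_mul, trace_Bmat]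
  simp [trAB, smul_smul]

lemma pbracket_trAB_two_one_trAB_zero_two :
    pbracket (trAB n 2 1) (trAB n 0 2) = (4 : ℂ) • trAB n 1 2 := by
  rw [pbracket_trAB_zero_two, gradX_trAB, trace_tracelessPart_mul, trace_Bmat]
  have h : (Bmat n * Amat n * Bmat n).trace = (Amat n * Bmat n ^ 2).trace := by
    rw [trace_mul_comm, ← mul_assoc, trace_mul_comm, pow_two]
  have hsum : ∑ i ∈ Finset.range 2, Amat n ^ (2 - 1 - i) * Bmat n ^ 1 * Amat n ^ i =
      Amat n * Bmat n + Bmat n * Amat n := by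
    simp [Finset.sum_range_succ]
  rw [hsum, add_mul, trace_add, h, mul_assoc, ← pow_two, mul_zero, smul_zero, sub_zero, trAB,
    pow_one]
  module

lemma pbracket_trAB_one_two_trAB_zero_two :
    pbracket (trAB n 1 2) (trAB n 0 2) = (2 : ℂ) • trAB n 0 3 := by
  rw [pbracket_trAB_zero_two, gradX_trAB_one_left, trace_tracelessPart_mul, trace_Bmat]
  simp [trAB, ← pow_succ]

lemma pbracket_trAB_one_one_trAB_succ_zero (p : ℕ) :
    pbracket (trAB n 1 1) (trAB n (p + 1) 0) = (-((p : ℂ) + 1)) • trAB n (p + 1) 0 := by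
  rw [pbracket_eq_trace, gradY_trAB_zero, gradY_trAB_one_one, gradX_trAB_succ_zero,
    trace_mul_tracelessPart, trace_Amat]
  simp only [trAB, pow_zero, mul_one, pow_one, mul_zero, zero_mul, trace_zero, zero_sub,
    smul_zero, sub_zero, mul_smul_comm, trace_smul, ← pow_succ']
  module

lemma pbracket_trAB_three_zero_trAB_one (p : ℕ) :
    pbracket (trAB n 3 0) (trAB n p 1) =
      (3 : ℂ) • trAB n (p + 2) 0 - (3 / n : ℂ) • (trAB n 2 0 * trAB n p 0) := by
  rw [pbracket_eq_trace, gradY_trAB_zero, gradY_trAB_one, gradX_trAB_succ_zero,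
    trace_tracelessPart_mul, trace_tracelessPart]
  simp only [trAB, pow_zero, mul_one, pow_one, zero_mul, trace_zero, sub_zero, smul_zero,
    mul_zero, smul_mul_assoc, trace_smul, trace_mul_tracelessPart, ← pow_add, add_comm 2 p]
  module

end Brackets

section Swap

variable {n : ℕ}

noncomputable def swapXY (n : ℕ) : PolyFun n →ₐ[ℂ] PolyFun n := rename Sum.swap

lemma pderiv_swapXY (v : (Fin n × Fin n) ⊕ (Fin n × Fin n)) (F : PolyFun n) :
    pderiv v (swapXY n F) = swapXY n (pderiv v.swap F) := by
  have := pderiv_rename Sum.swap_leftInverse.injective v.swap F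
  rwa [Sum.swap_swap] at this

lemma swapXY_pbracket (F G : PolyFun n) :
    swapXY n (pbracket F G) = pbracket (swapXY n G) (swapXY n F) := by
  simp only [pbracket, map_sum, map_sub, map_mul, pderiv_swapXY, Sum.swap_inl, Sum.swap_inr]
  rw [Finset.sum_comm]
  refine Finset.sum_congr rfl fun j _ => Finset.sum_congr rfl fun k _ => by ring

lemma map_swapXY_Xmat : (Xmat n).map (swapXY n) = Ymat n := by
  ext; simp [Xmat, Ymat, swapXY]

lemma map_swapXY_Ymat : (Ymat n).map (swapXY n) = Xmat n := by
  ext; simp [Xmat, Ymat, swapXY]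

lemma swapXY_trAB (p q : ℕ) : swapXY n (trAB n p q) = trAB n q p := by
  rw [trAB, AddMonoidHom.map_trace, ← AlgHom.mapMatrix_apply, map_mul, map_pow, map_pow,
    AlgHom.mapMatrix_apply, AlgHom.mapMatrix_apply, Amat_eq_tracelessPart, Bmat_eq_tracelessPart,
    map_tracelessPart, map_tracelessPart, map_swapXY_Xmat, map_swapXY_Ymat,
    ← Amat_eq_tracelessPart, ← Bmat_eq_tracelessPart, trace_mul_comm, trAB]

lemma LieGen.map_swapXY {S : Set (PolyFun n)} (hS : ∀ f ∈ S, LieGen n S (swapXY n f))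
    {F : PolyFun n} (hF : LieGen n S F) : LieGen n S (swapXY n F) := by
  induction hF with
  | base hf => exact hS _ hf
  | zero => simpa using LieGen.zero
  | add _ _ ihf ihg => simpa using ihf.add ihg
  | smul c _ ih => simpa using ih.smul c
  | bracket _ _ ihf ihg => rw [swapXY_pbracket]; exact ihg.bracket ihf

end Swap

namespace LieGen

variable {n : ℕ} {S : Set (PolyFun n)}

lemma of_pbracket_eq_smul {f g x : PolyFun n} {c : ℂ} (hc : c ≠ 0) (hf : LieGen n S f)
    (hg : LieGen n S g) (h : pbracket f g = c • x) : LieGen n S x := by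
  simpa [h, smul_smul, inv_mul_cancel₀ hc] using (hf.bracket hg).smul c⁻¹

end LieGen

section LieF

variable {n : ℕ}

lemma lieGen_trAB_two_zero : LieGen n (calF n) (trAB n 2 0) := .base (by simp [calF])

lemma lieGen_trAB_zero_two : LieGen n (calF n) (trAB n 0 2) := .base (by simp [calF])

lemma lieGen_trAB_three_zero : LieGen n (calF n) (trAB n 3 0) := .base (by simp [calF])

lemma lieGen_trAB_one_one_sq : LieGen n (calF n) (trAB n 1 1 ^ 2) := .base (by simp [calF])

lemma lieGen_trAB_one {p : ℕ} (h : LieGen n (calF n) (trAB n (p + 1) 0)) :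
    LieGen n (calF n) (trAB n p 1) :=
  .of_pbracket_eq_smul (mul_ne_zero two_ne_zero (Nat.cast_add_one_ne_zero p)) h
    lieGen_trAB_zero_two (pbracket_trAB_succ_zero_trAB_zero_two p)

lemma lieGen_trAB_zero_three : LieGen n (calF n) (trAB n 0 3) := by
  have h21 : LieGen n (calF n) (trAB n 2 1) := lieGen_trAB_one lieGen_trAB_three_zero
  have h12 : LieGen n (calF n) (trAB n 1 2) :=
    .of_pbracket_eq_smul (by norm_num) h21 lieGen_trAB_zero_two
      pbracket_trAB_two_one_trAB_zero_two
  exact .of_pbracket_eq_smul (by norm_num) h12 lieGen_trAB_zero_two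
    pbracket_trAB_one_two_trAB_zero_two

lemma lieGen_trAB_one_one_mul_trAB_two_zero :
    LieGen n (calF n) (trAB n 1 1 * trAB n 2 0) := by
  refine .of_pbracket_eq_smul (c := -4) (by norm_num) lieGen_trAB_one_one_sq
    lieGen_trAB_two_zero ?_
  have h := pbracket_trAB_one_one_trAB_succ_zero (n := n) 1
  norm_num at h
  rw [pow_two, pbracket_mul_left, h, mul_neg, mul_smul_comm]
  module

lemma lieGen_trAB_two_zero_mul {p : ℕ} (h : LieGen n (calF n) (trAB n (p + 1) 0)) :
    LieGen n (calF n) (trAB n 2 0 * trAB n (p + 1) 0) := by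
  refine .of_pbracket_eq_smul (c := -((p : ℂ) + 1)) (neg_ne_zero.mpr (Nat.cast_add_one_ne_zero p))
    lieGen_trAB_one_one_mul_trAB_two_zero h ?_
  rw [pbracket_mul_left, pbracket_trAB_zero_trAB_zero, pbracket_trAB_one_one_trAB_succ_zero,
    mul_zero, zero_add, mul_smul_comm]

lemma lieGen_trAB_zero : ∀ p, 2 ≤ p → LieGen n (calF n) (trAB n p 0)
  | 2, _ => lieGen_trAB_two_zero
  | 3, _ => lieGen_trAB_three_zero
  | p + 4, _ => by
    have hB : LieGen n (calF n) (trAB n (p + 2) 1) :=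
      lieGen_trAB_one (lieGen_trAB_zero (p + 3) (by omega))
    have hprod := lieGen_trAB_two_zero_mul (lieGen_trAB_zero (p + 2) (by omega))
    have key : trAB n (p + 4) 0 = (3⁻¹ : ℂ) • pbracket (trAB n 3 0) (trAB n (p + 2) 1)
        + (n : ℂ)⁻¹ • (trAB n 2 0 * trAB n (p + 2) 0) := by
      rw [pbracket_trAB_three_zero_trAB_one]
      module
    rw [key]
    exact ((lieGen_trAB_three_zero.bracket hB).smul _).add (hprod.smul _)

lemma lieGen_swapXY_of_mem_calF : ∀ f ∈ calF n, LieGen n (calF n) (swapXY n f) := by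
  simp only [calF, Set.mem_insert_iff, Set.mem_singleton_iff, forall_eq_or_imp, forall_eq,
    swapXY_trAB, map_pow]
  exact ⟨lieGen_trAB_zero_two, lieGen_trAB_two_zero, lieGen_trAB_zero_three,
    lieGen_trAB_one_one_sq⟩

end LieF

theorem stmt_7_general (n : ℕ) (j k : ℕ) (hj : 2 ≤ j) (hk : 2 ≤ k) :
    (∃ g : PolyFun n, LieGen n (calF n) g ∧
      ∀ P ∈ Shat n, evalP P.1 P.2 (trAB n j 0) = evalP P.1 P.2 g) ∧
    (∃ h : PolyFun n, LieGen n (calF n) h ∧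
      ∀ P ∈ Shat n, evalP P.1 P.2 (trAB n 0 k) = evalP P.1 P.2 h) := by
  refine ⟨⟨_, lieGen_trAB_zero j hj, fun _ _ => rfl⟩, ⟨_, ?_, fun _ _ => rfl⟩⟩
  rw [← swapXY_trAB]
  exact (lieGen_trAB_zero k hk).map_swapXY lieGen_swapXY_of_mem_calF

/-- for all `j, k ≥ 2` there are `g, h ∈ Lie(ℱ)` such that `tr A^j`
agrees with `g` and `tr B^k` agrees with `h` at every point of `Ŝ_n`. -/
theorem stmt_7 (n : ℕ) (hn : 1 ≤ n) (j k : ℕ) (hj : 2 ≤ j) (hk : 2 ≤ k) :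
    (∃ g : PolyFun n, LieGen n (calF n) g ∧
      ∀ P ∈ Shat n, evalP P.1 P.2 (trAB n j 0) = evalP P.1 P.2 g) ∧
    (∃ h : PolyFun n, LieGen n (calF n) h ∧
      ∀ P ∈ Shat n, evalP P.1 P.2 (trAB n 0 k) = evalP P.1 P.2 h) :=
  stmt_7_general n j k hj hk
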